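/- Unisolvence of the quadrilateral Lin–Tobiska–Zhou (QLTZ) element on the reference quadrilateral: the linear map from the space V := span_ℝ{1, ξ, η, ξ², η²} of functions on ℝ² to ℝ⁵ given by v ↦ (⨍_Q v, ⨍_{e₁}v, ⨍_{e₂}v, ⨍_{e₃}v, ⨍_{e₄}v) is bijective; equivalently, for every (c₀, c₁, c₂, c₃, c₄) ∈ ℝ⁵ there is exactly one v ∈ V with ⨍_Q v = c₀ and ⨍_{eᵢ}v = cᵢ for i = 1,…,4. In particular V has dimension 5. -/

import Mathlib

open MeasureTheory

noncomputable section

/-- Vertex a₁ of the reference convex quadrilateral (points written as (η, ξ)). -/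
def a1 (α β : ℝ) : ℝ × ℝ := (-1 - α, 1 - β)

/-- Vertex a₂. -/
def a2 (α β : ℝ) : ℝ × ℝ := (-1 + α, -1 + β)

/-- Vertex a₃. -/
def a3 (α β : ℝ) : ℝ × ℝ := (1 - α, -1 - β)

/-- Vertex a₄. -/
def a4 (α β : ℝ) : ℝ × ℝ := (1 + α, 1 + β)

/-- The reference convex quadrilateral Q = conv{a₁, a₂, a₃, a₄}. -/
def Quad (α β : ℝ) : Set (ℝ × ℝ) :=
  convexHull ℝ {a1 α β, a2 α β, a3 α β, a4 α β}

/-- Average of `u` over the segment from `P` to `R`: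
    ⨍ u = ∫_{t ∈ [0,1]} u((1−t)P + tR) dt. -/
def edgeAvg (P R : ℝ × ℝ) (u : ℝ × ℝ → ℝ) : ℝ :=
  ∫ t in (0:ℝ)..1, u ((1 - t) • P + t • R)

/-- Average of `u` over the quadrilateral Q: (∫_Q u dλ)/λ(Q). -/
def quadAvg (α β : ℝ) (u : ℝ × ℝ → ℝ) : ℝ :=
  (∫ p in Quad α β, u p) / (volume (Quad α β)).toReal

/-- The QLTZ shape function space V = span_ℝ{1, ξ, η, ξ², η²}, with ξ(p) = p.2, η(p) = p.1. -/
def QLTZspace : Submodule ℝ (ℝ × ℝ → ℝ) :=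
  Submodule.span ℝ
    ({fun _ => 1, fun p => p.2, fun p => p.1, fun p => p.2 ^ 2, fun p => p.1 ^ 2} :
      Set (ℝ × ℝ → ℝ))

/-! On `V = span{1, ξ, η, ξ², η²}` Simpson's rule computes every edge average exactly, and the four
edge conditions leave only the multiples of
`w = edgeMeanFree α β = η² + ξ² - (2β/3) η - (2α/3) ξ - (4 + α² + β²)/3`.
Cutting `Q` along the diagonal `a₁a₃` into two triangles, on each of which the edge-midpoint rule
integrates quadratics exactly, gives `⨍_Q w = -2/3 - 2(α² + β²)/9 ≠ 0`. Hence the five degrees of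
freedom are injective on `V`, which has dimension 5, so they are bijective. -/

open Set

def IsQuadratic (g : ℝ × ℝ → ℝ) : Prop :=
  ∃ a b c d e f : ℝ, ∀ p : ℝ × ℝ,
    g p = a + b * p.1 + c * p.2 + d * p.1 ^ 2 + e * (p.1 * p.2) + f * p.2 ^ 2

namespace IsQuadratic

variable {g : ℝ × ℝ → ℝ}

theorem continuous (hg : IsQuadratic g) : Continuous g := by
  obtain ⟨a, b, c, d, e, f, hg⟩ := hg
  rw [funext hg]
  fun_prop

theorem comp_affine (hg : IsQuadratic g) (P u v : ℝ × ℝ) :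
    IsQuadratic fun p => g (P + p.1 • u + p.2 • v) := by
  obtain ⟨a, b, c, d, e, f, hg⟩ := hg
  refine ⟨g P,
    b * u.1 + c * u.2 + 2 * d * P.1 * u.1 + e * (P.1 * u.2 + P.2 * u.1) + 2 * f * P.2 * u.2,
    b * v.1 + c * v.2 + 2 * d * P.1 * v.1 + e * (P.1 * v.2 + P.2 * v.1) + 2 * f * P.2 * v.2,
    d * u.1 ^ 2 + e * u.1 * u.2 + f * u.2 ^ 2,
    2 * d * u.1 * v.1 + e * (u.1 * v.2 + u.2 * v.1) + 2 * f * u.2 * v.2,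
    d * v.1 ^ 2 + e * v.1 * v.2 + f * v.2 ^ 2, fun p => ?_⟩
  simp only [hg, Prod.fst_add, Prod.snd_add, Prod.smul_fst, Prod.smul_snd, smul_eq_mul]
  ring

end IsQuadratic

theorem integral_cubic (a b c d x : ℝ) :
    ∫ t in (0 : ℝ)..x, (a + b * t + c * t ^ 2 + d * t ^ 3) =
      a * x + b * x ^ 2 / 2 + c * x ^ 3 / 3 + d * x ^ 4 / 4 := by
  have hi : ∀ f : ℝ → ℝ, Continuous f → IntervalIntegrable f volume 0 x :=
    fun f hf => hf.intervalIntegrable _ _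
  rw [intervalIntegral.integral_add (hi _ (by fun_prop)) (hi _ (by fun_prop)),
    intervalIntegral.integral_add (hi _ (by fun_prop)) (hi _ (by fun_prop)),
    intervalIntegral.integral_add (hi _ (by fun_prop)) (hi _ (by fun_prop)),
    intervalIntegral.integral_const_mul, intervalIntegral.integral_const_mul,
    intervalIntegral.integral_const_mul, integral_id, integral_pow, integral_pow,
    intervalIntegral.integral_const]
  simp
  ring

theorem edgeAvg_eq_simpson {g : ℝ × ℝ → ℝ} (hg : IsQuadratic g) (P R : ℝ × ℝ) :
    edgeAvg P R g = (g P + 4 * g (midpoint ℝ P R) + g R) / 6 := by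
  obtain ⟨a, b, _, d, _, _, h⟩ := hg.comp_affine P (R - P) 0
  have hline : ∀ t : ℝ, g ((1 - t) • P + t • R) = a + b * t + d * t ^ 2 + 0 * t ^ 3 := by
    intro t
    have := h (t, 0)
    simp only [smul_zero, add_zero, mul_zero, zero_pow two_ne_zero] at this
    rw [show (1 - t) • P + t • R = P + t • (R - P) by module, this]
    ring
  have hP := hline 0
  have hM := hline (1 / 2)
  have hR := hline 1
  rw [show (1 - 1 / 2 : ℝ) • P + (1 / 2 : ℝ) • R = midpoint ℝ P R by
    rw [midpoint_eq_smul_add, invOf_eq_inv]; module] at hM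
  simp only [sub_zero, one_smul, zero_smul, add_zero, sub_self, zero_add] at hP hR
  rw [edgeAvg, intervalIntegral.integral_congr fun t _ => hline t, integral_cubic, hP, hM, hR]
  ring

def stdTriangle : Set (ℝ × ℝ) := {p | 0 ≤ p.1 ∧ 0 ≤ p.2 ∧ p.1 + p.2 ≤ 1}

theorem convex_stdTriangle : Convex ℝ stdTriangle := by
  rintro x ⟨hx₁, hx₂, hx⟩ y ⟨hy₁, hy₂, hy⟩ a b ha hb hab
  refine ⟨?_, ?_, ?_⟩ <;>
    simp only [Prod.fst_add, Prod.snd_add, Prod.smul_fst, Prod.smul_snd, smul_eq_mul] <;>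
    nlinarith

theorem isCompact_stdTriangle : IsCompact stdTriangle := by
  refine (isCompact_Icc (a := ((0 : ℝ), (0 : ℝ))) (b := (1, 1))).of_isClosed_subset ?_ ?_
  · exact (isClosed_le continuous_const continuous_fst).inter
      ((isClosed_le continuous_const continuous_snd).inter
        (isClosed_le (continuous_fst.add continuous_snd) continuous_const))
  · rintro p ⟨h₁, h₂, h⟩
    exact ⟨⟨h₁, h₂⟩, ⟨by linarith, by linarith⟩⟩

theorem setIntegral_stdTriangle {g : ℝ × ℝ → ℝ} (hg : Continuous g) :
    ∫ p in stdTriangle, g p = ∫ s in (0 : ℝ)..1, ∫ t in (0 : ℝ)..(1 - s), g (s, t) := by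
  have hS := isCompact_stdTriangle.isClosed.measurableSet
  have hslice : ∀ s, ∫ t, stdTriangle.indicator g (s, t) =
      (Icc 0 1).indicator (fun s => ∫ t in (0 : ℝ)..(1 - s), g (s, t)) s := by
    intro s
    by_cases hs : s ∈ Icc (0 : ℝ) 1
    · have hmem : ∀ t, (s, t) ∈ stdTriangle ↔ t ∈ Icc 0 (1 - s) := fun t =>
        ⟨fun ⟨_, h₂, h⟩ => ⟨h₂, by linarith⟩, fun ⟨h₂, h⟩ => ⟨hs.1, h₂, by linarith⟩⟩
      rw [indicator_of_mem hs, intervalIntegral.integral_of_le (by linarith [hs.2]),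
        ← integral_Icc_eq_integral_Ioc, ← integral_indicator measurableSet_Icc]
      congr 1
      ext t
      simp only [indicator, hmem]
    · rw [indicator_of_notMem hs]
      have hzero : ∀ t, stdTriangle.indicator g (s, t) = 0 := fun t =>
        indicator_of_notMem (fun h => hs ⟨h.1, by linarith [h.2.1, h.2.2]⟩) _
      simp [hzero]
  rw [← integral_indicator hS, Measure.volume_eq_prod,
    integral_prod _ ((integrable_indicator_iff hS).2
      (hg.continuousOn.integrableOn_compact isCompact_stdTriangle))]
  simp_rw [hslice]
  rw [integral_indicator measurableSet_Icc, integral_Icc_eq_integral_Ioc,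
    ← intervalIntegral.integral_of_le zero_le_one]

theorem setIntegral_stdTriangle_quadratic {g : ℝ × ℝ → ℝ} (hg : IsQuadratic g) :
    ∫ p in stdTriangle, g p = (g (1 / 2, 0) + g (1 / 2, 1 / 2) + g (0, 1 / 2)) / 6 := by
  rw [setIntegral_stdTriangle hg.continuous]
  obtain ⟨a, b, c, d, e, f, hg⟩ := hg
  have hinner : ∀ s : ℝ, ∫ t in (0 : ℝ)..(1 - s), g (s, t) =
      (a + b * s + d * s ^ 2) * (1 - s) + (c + e * s) * (1 - s) ^ 2 / 2 + f * (1 - s) ^ 3 / 3 := by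
    intro s
    rw [intervalIntegral.integral_congr (g := fun t =>
        (a + b * s + d * s ^ 2) + (c + e * s) * t + f * t ^ 2 + 0 * t ^ 3)
        (fun t _ => by simp only [hg]; ring), integral_cubic]
    ring
  rw [intervalIntegral.integral_congr (g := fun s => (a + c / 2 + f / 3) +
      (b - a + e / 2 - c - f) * s + (d - b + c / 2 - e + f) * s ^ 2 + (-d + e / 2 - f / 3) * s ^ 3)
      (fun s _ => by simp only [hinner]; ring), integral_cubic]
  simp only [hg]
  ring

def cross (u v : ℝ × ℝ) : ℝ := u.1 * v.2 - u.2 * v.1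

theorem smul_add_smul_add_smul_mem_convexHull {E : Type*} [AddCommGroup E] [Module ℝ E]
    {x y z : E} {a b c : ℝ} (ha : 0 ≤ a) (hb : 0 ≤ b) (hc : 0 ≤ c) (habc : a + b + c = 1) :
    a • x + b • y + c • z ∈ convexHull ℝ {x, y, z} :=
  mem_convexHull_of_exists_fintype ![a, b, c] ![x, y, z]
    (by simp [Fin.forall_fin_succ, ha, hb, hc]) (by simp [Fin.sum_univ_three, habc])
    (by simp [Fin.forall_fin_succ]) (by simp [Fin.sum_univ_three, add_assoc])

theorem image_stdTriangle (P Q R : ℝ × ℝ) :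
    (fun p : ℝ × ℝ => P + p.1 • (Q - P) + p.2 • (R - P)) '' stdTriangle =
      convexHull ℝ {P, Q, R} := by
  apply Subset.antisymm
  · rintro _ ⟨p, ⟨h₁, h₂, h⟩, rfl⟩
    convert smul_add_smul_add_smul_mem_convexHull (x := P) (y := Q) (z := R)
      (by linarith : 0 ≤ 1 - p.1 - p.2) h₁ h₂ (by ring) using 1
    module
  · refine convexHull_min ?_ ?_
    · rintro x (rfl | rfl | rfl)
      · exact ⟨(0, 0), ⟨le_rfl, le_rfl, by norm_num⟩, by simp⟩
      · exact ⟨(1, 0), ⟨zero_le_one, le_rfl, by norm_num⟩, by simp⟩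
      · exact ⟨(0, 1), ⟨le_rfl, zero_le_one, by norm_num⟩, by simp⟩
    · rintro _ ⟨p, hp, rfl⟩ _ ⟨q, hq, rfl⟩ a b ha hb hab
      refine ⟨a • p + b • q, convex_stdTriangle hp hq ha hb hab, ?_⟩
      rw [eq_sub_of_add_eq hab]
      simp only [Prod.fst_add, Prod.snd_add, Prod.smul_fst, Prod.smul_snd, smul_eq_mul]
      module

theorem setIntegral_convexHull_triangle {P Q R : ℝ × ℝ} (h : cross (Q - P) (R - P) ≠ 0)
    (g : ℝ × ℝ → ℝ) :
    ∫ x in convexHull ℝ {P, Q, R}, g x =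
      |cross (Q - P) (R - P)| * ∫ p in stdTriangle, g (P + p.1 • (Q - P) + p.2 • (R - P)) := by
  set L : ℝ × ℝ →L[ℝ] ℝ × ℝ := (ContinuousLinearMap.fst ℝ ℝ ℝ).smulRight (Q - P) +
    (ContinuousLinearMap.snd ℝ ℝ ℝ).smulRight (R - P)
  have hφ : (fun p : ℝ × ℝ => P + p.1 • (Q - P) + p.2 • (R - P)) = fun p => P + L p := by
    ext p <;> simp [L, add_assoc]
  have hdet : L.det = cross (Q - P) (R - P) := by
    rw [ContinuousLinearMap.det, ← LinearMap.det_toMatrix (Module.Basis.finTwoProd ℝ),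
      Matrix.det_fin_two]
    simp [L, LinearMap.toMatrix_apply, cross]
    ring
  have hinj : Function.Injective L := by
    have : IsUnit (L : Module.End ℝ (ℝ × ℝ)) := by
      rw [LinearMap.isUnit_iff_isUnit_det]
      exact (hdet ▸ h).isUnit
    exact ((Module.End.isUnit_iff _).1 this).1
  rw [← image_stdTriangle, hφ, integral_image_eq_integral_abs_det_fderiv_smul volume
    isCompact_stdTriangle.isClosed.measurableSet
    (fun x _ => (L.hasFDerivAt.const_add P).hasFDerivWithinAt)
    ((add_right_injective P).comp hinj).injOn, hdet]
  simp_rw [smul_eq_mul]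
  rw [integral_const_mul]
  simp [L, add_assoc]

theorem setIntegral_convexHull_triangle_quadratic {P Q R : ℝ × ℝ} (h : cross (Q - P) (R - P) ≠ 0)
    {g : ℝ × ℝ → ℝ} (hg : IsQuadratic g) :
    ∫ x in convexHull ℝ {P, Q, R}, g x = |cross (Q - P) (R - P)| / 6 *
      (g (midpoint ℝ P Q) + g (midpoint ℝ Q R) + g (midpoint ℝ R P)) := by
  have hPQ : P + (1 / 2 : ℝ) • (Q - P) + (0 : ℝ) • (R - P) = midpoint ℝ P Q := by
    rw [midpoint_eq_smul_add, invOf_eq_inv]; module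
  have hQR : P + (1 / 2 : ℝ) • (Q - P) + (1 / 2 : ℝ) • (R - P) = midpoint ℝ Q R := by
    rw [midpoint_eq_smul_add, invOf_eq_inv]; module
  have hRP : P + (0 : ℝ) • (Q - P) + (1 / 2 : ℝ) • (R - P) = midpoint ℝ R P := by
    rw [midpoint_eq_smul_add, invOf_eq_inv]; module
  rw [setIntegral_convexHull_triangle h, setIntegral_stdTriangle_quadratic (hg.comp_affine _ _ _)]
  simp only [hPQ, hQR, hRP]
  ring

section Quadrilateral

variable {E : Type*} [AddCommGroup E] [Module ℝ E]

theorem segment_subset_union_of_mem {x y m : E} (hm : m ∈ segment ℝ x y) :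
    segment ℝ x y ⊆ segment ℝ x m ∪ segment ℝ m y := by
  intro z hz
  rw [mem_segment_iff_wbtw] at hm hz
  rw [mem_union, mem_segment_iff_wbtw, mem_segment_iff_wbtw]
  have hray : SameRay ℝ (m -ᵥ x) (z -ᵥ x) :=
    hm.sameRay_vsub_left.trans hz.sameRay_vsub_left.symm fun h => Or.inl <| by
      rw [vsub_eq_zero_iff_eq] at h ⊢
      subst h
      exact (wbtw_self_iff ℝ).1 hm
  rcases wbtw_total_of_sameRay_vsub_left hray with h | h
  · exact Or.inr (hz.trans_left_right h)
  · exact Or.inl h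

theorem convexHull_quadrilateral_eq_union {P₁ P₂ P₃ P₄ m : E} (h₁₃ : m ∈ segment ℝ P₁ P₃)
    (h₂₄ : m ∈ segment ℝ P₂ P₄) :
    convexHull ℝ {P₁, P₂, P₃, P₄} = convexHull ℝ {P₁, P₂, P₃} ∪ convexHull ℝ {P₁, P₃, P₄} := by
  refine Subset.antisymm ?_ (union_subset (convexHull_mono ?_) (convexHull_mono ?_))
  rotate_left
  · intro x hx; simp only [mem_insert_iff, mem_singleton_iff] at hx ⊢; tauto
  · intro x hx; simp only [mem_insert_iff, mem_singleton_iff] at hx ⊢; tauto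
  rw [insert_comm P₂, ← convexJoin_segments]
  intro x hx
  obtain ⟨y, hy, z, hz, hx⟩ := mem_convexJoin.1 hx
  have hT₁ : segment ℝ P₁ P₃ ⊆ convexHull ℝ {P₁, P₂, P₃} :=
    segment_subset_convexHull (by simp) (by simp)
  have hT₂ : segment ℝ P₁ P₃ ⊆ convexHull ℝ {P₁, P₃, P₄} :=
    segment_subset_convexHull (by simp) (by simp)
  rcases segment_subset_union_of_mem h₂₄ hz with hz | hz
  · refine Or.inl ((convex_convexHull ℝ _).segment_subset (hT₁ hy) ?_ hx)
    exact (convex_convexHull ℝ _).segment_subset (subset_convexHull ℝ _ (by simp)) (hT₁ h₁₃) hz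
  · refine Or.inr ((convex_convexHull ℝ _).segment_subset (hT₂ hy) ?_ hx)
    exact (convex_convexHull ℝ _).segment_subset (hT₂ h₁₃) (subset_convexHull ℝ _ (by simp)) hz

end Quadrilateral

theorem volume_setOf_fst_add_snd_eq (c : ℝ) : volume {p : ℝ × ℝ | p.1 + p.2 = c} = 0 := by
  rw [Measure.volume_eq_prod,
    Measure.measure_prod_null (measurableSet_eq_fun (by fun_prop) measurable_const)]
  refine Filter.Eventually.of_forall fun x => ?_
  have : Prod.mk x ⁻¹' {p : ℝ × ℝ | p.1 + p.2 = c} = {c - x} := by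
    ext y
    simp [eq_sub_iff_add_eq']
  simp [this]

section ReferenceQuadrilateral

variable {α β : ℝ}

theorem Quad_eq_union (hα : 0 < α) (hβ : 0 < β) (hαβ : α + β < 1) :
    Quad α β = convexHull ℝ {a1 α β, a2 α β, a3 α β} ∪ convexHull ℝ {a1 α β, a3 α β, a4 α β} :=
  -- the diagonals `a₁a₃` and `a₂a₄` cross at `(-β, -α)`
  convexHull_quadrilateral_eq_union (m := (-β, -α))
    ⟨(1 - α + β) / 2, (1 + α - β) / 2, by linarith, by linarith, by ring,
      by ext <;> simp [a1, a3] <;> ring⟩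
    ⟨(1 + α + β) / 2, (1 - α - β) / 2, by linarith, by linarith, by ring,
      by ext <;> simp [a2, a4] <;> ring⟩

theorem volume_inter_triangles_eq_zero (hα : 0 < α) (hβ : 0 < β) (hαβ : α + β < 1) :
    volume (convexHull ℝ {a1 α β, a2 α β, a3 α β} ∩ convexHull ℝ {a1 α β, a3 α β, a4 α β}) = 0 := by
  -- the diagonal `a₁a₃` lies on the line `η + ξ = -α - β`, which separates the two triangles
  have hℓ : IsLinearMap ℝ fun p : ℝ × ℝ => p.1 + p.2 :=
    (LinearMap.fst ℝ ℝ ℝ + LinearMap.snd ℝ ℝ ℝ).isLinear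
  have h₁ : convexHull ℝ {a1 α β, a2 α β, a3 α β} ⊆ {p | p.1 + p.2 ≤ -α - β} :=
    convexHull_min (by rintro _ (rfl | rfl | rfl) <;> simp [a1, a2, a3] <;> linarith)
      (convex_halfSpace_le hℓ _)
  have h₂ : convexHull ℝ {a1 α β, a3 α β, a4 α β} ⊆ {p | -α - β ≤ p.1 + p.2} :=
    convexHull_min (by rintro _ (rfl | rfl | rfl) <;> simp [a1, a3, a4] <;> linarith)
      (convex_halfSpace_ge hℓ _)
  exact measure_mono_null (fun p hp => le_antisymm (h₁ hp.1) (h₂ hp.2))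
    (volume_setOf_fst_add_snd_eq (-α - β))

theorem setIntegral_Quad (hα : 0 < α) (hβ : 0 < β) (hαβ : α + β < 1) {g : ℝ × ℝ → ℝ}
    (hg : Continuous g) :
    ∫ x in Quad α β, g x = (∫ x in convexHull ℝ {a1 α β, a2 α β, a3 α β}, g x) +
      ∫ x in convexHull ℝ {a1 α β, a3 α β, a4 α β}, g x := by
  have hT : ∀ P Q R : ℝ × ℝ, IsCompact (convexHull ℝ {P, Q, R}) := fun P Q R =>
    (toFinite _).isCompact_convexHull ℝ
  rw [Quad_eq_union hα hβ hαβ]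
  exact setIntegral_union₀ (volume_inter_triangles_eq_zero hα hβ hαβ)
    (hT _ _ _).isClosed.measurableSet.nullMeasurableSet
    (hg.continuousOn.integrableOn_compact (hT _ _ _))
    (hg.continuousOn.integrableOn_compact (hT _ _ _))

theorem setIntegral_Quad_quadratic (hα : 0 < α) (hβ : 0 < β) (hαβ : α + β < 1)
    {g : ℝ × ℝ → ℝ} (hg : IsQuadratic g) :
    ∫ x in Quad α β, g x =
      2 * (1 - α - β) / 3 * (g (midpoint ℝ (a1 α β) (a2 α β)) +
        g (midpoint ℝ (a2 α β) (a3 α β)) + g (midpoint ℝ (a3 α β) (a1 α β))) +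
      2 * (1 + α + β) / 3 * (g (midpoint ℝ (a1 α β) (a3 α β)) +
        g (midpoint ℝ (a3 α β) (a4 α β)) + g (midpoint ℝ (a4 α β) (a1 α β))) := by
  have h₁ : cross (a2 α β - a1 α β) (a3 α β - a1 α β) = 4 * (1 - α - β) := by
    simp [cross, a1, a2, a3]; ring
  have h₂ : cross (a3 α β - a1 α β) (a4 α β - a1 α β) = 4 * (1 + α + β) := by
    simp [cross, a1, a3, a4]; ring
  rw [setIntegral_Quad hα hβ hαβ hg.continuous,
    setIntegral_convexHull_triangle_quadratic (h₁ ▸ by nlinarith) hg,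
    setIntegral_convexHull_triangle_quadratic (h₂ ▸ by nlinarith) hg, h₁, h₂,
    abs_of_pos (by linarith), abs_of_pos (by linarith)]
  ring

theorem volume_Quad (hα : 0 < α) (hβ : 0 < β) (hαβ : α + β < 1) :
    (volume (Quad α β)).toReal = 4 := by
  have h := setIntegral_Quad_quadratic hα hβ hαβ (g := fun _ => 1) ⟨1, 0, 0, 0, 0, 0, by simp⟩
  rw [setIntegral_const, smul_eq_mul, mul_one] at h
  rw [← Measure.real, h]
  ring

def edgeMeanFree (α β : ℝ) : ℝ × ℝ → ℝ := fun p =>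
  p.1 ^ 2 + p.2 ^ 2 - 2 * β / 3 * p.1 - 2 * α / 3 * p.2 - (4 + α ^ 2 + β ^ 2) / 3

theorem isQuadratic_edgeMeanFree : IsQuadratic (edgeMeanFree α β) :=
  ⟨-(4 + α ^ 2 + β ^ 2) / 3, -(2 * β / 3), -(2 * α / 3), 1, 0, 1,
    fun p => by simp only [edgeMeanFree]; ring⟩

theorem quadAvg_edgeMeanFree (hα : 0 < α) (hβ : 0 < β) (hαβ : α + β < 1) :
    quadAvg α β (edgeMeanFree α β) = -(2 / 3) - 2 * (α ^ 2 + β ^ 2) / 9 := by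
  rw [quadAvg, setIntegral_Quad_quadratic hα hβ hαβ isQuadratic_edgeMeanFree, volume_Quad hα hβ hαβ]
  simp [edgeMeanFree, midpoint_eq_smul_add, a1, a2, a3, a4]
  ring

end ReferenceQuadrilateral

def qltzMonomial : Fin 5 → ℝ × ℝ → ℝ :=
  ![fun _ => 1, fun p => p.2, fun p => p.1, fun p => p.2 ^ 2, fun p => p.1 ^ 2]

theorem QLTZspace_eq_span : QLTZspace = Submodule.span ℝ (range qltzMonomial) := by
  rw [QLTZspace]
  congr 1
  ext f
  simp only [qltzMonomial, mem_range, Fin.exists_fin_succ, Matrix.cons_val_zero,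
    Matrix.cons_val_succ, IsEmpty.exists_iff, or_false, mem_insert_iff, mem_singleton_iff]
  tauto

theorem linearIndependent_qltzMonomial : LinearIndependent ℝ qltzMonomial := by
  rw [Fintype.linearIndependent_iff]
  intro c hc
  have h : ∀ p : ℝ × ℝ, c 0 + c 1 * p.2 + c 2 * p.1 + c 3 * p.2 ^ 2 + c 4 * p.1 ^ 2 = 0 := by
    intro p
    simpa [Fin.sum_univ_five, qltzMonomial] using congrFun hc p
  have h₁ := h (0, 0)
  have h₂ := h (1, 0)
  have h₃ := h (0, 1)
  have h₄ := h (2, 0)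
  have h₅ := h (0, 2)
  norm_num at h₁ h₂ h₃ h₄ h₅
  intro i
  fin_cases i <;> simp <;> linarith

theorem finrank_QLTZspace : Module.finrank ℝ QLTZspace = 5 := by
  rw [QLTZspace_eq_span, finrank_span_eq_card linearIndependent_qltzMonomial, Fintype.card_fin]

theorem exists_coeffs_of_mem_QLTZspace {v : ℝ × ℝ → ℝ} (hv : v ∈ QLTZspace) :
    ∃ c₀ c₁ c₂ c₃ c₄ : ℝ, ∀ p : ℝ × ℝ,
      v p = c₀ + c₁ * p.2 + c₂ * p.1 + c₃ * p.2 ^ 2 + c₄ * p.1 ^ 2 := by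
  rw [QLTZspace_eq_span, Submodule.mem_span_range_iff_exists_fun] at hv
  obtain ⟨c, rfl⟩ := hv
  exact ⟨c 0, c 1, c 2, c 3, c 4, fun p => by simp [Fin.sum_univ_five, qltzMonomial]⟩

instance : FiniteDimensional ℝ QLTZspace :=
  Module.finite_of_finrank_eq_succ finrank_QLTZspace

theorem isQuadratic_of_mem_QLTZspace {v : ℝ × ℝ → ℝ} (hv : v ∈ QLTZspace) : IsQuadratic v := by
  obtain ⟨c₀, c₁, c₂, c₃, c₄, hc⟩ := exists_coeffs_of_mem_QLTZspace hv
  exact ⟨c₀, c₂, c₁, c₄, 0, c₃, fun p => by rw [hc]; ring⟩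

theorem exists_eq_smul_edgeMeanFree_of_edgeAvg_eq_zero {α β : ℝ} {v : ℝ × ℝ → ℝ}
    (hv : v ∈ QLTZspace) (h₁ : edgeAvg (a1 α β) (a2 α β) v = 0)
    (h₂ : edgeAvg (a2 α β) (a3 α β) v = 0) (h₃ : edgeAvg (a3 α β) (a4 α β) v = 0)
    (h₄ : edgeAvg (a4 α β) (a1 α β) v = 0) :
    ∃ t : ℝ, v = t • edgeMeanFree α β := by
  obtain ⟨c₀, c₁, c₂, c₃, c₄, hc⟩ := exists_coeffs_of_mem_QLTZspace hv
  simp only [edgeAvg_eq_simpson (isQuadratic_of_mem_QLTZspace hv), midpoint_eq_smul_add,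
    invOf_eq_inv, hc, a1, a2, a3, a4, Prod.mk_add_mk, Prod.smul_mk, smul_eq_mul] at h₁ h₂ h₃ h₄
  have h₄₃ : c₄ = c₃ := by linear_combination (3 / 4) * (h₁ + h₃ - h₂ - h₄)
  have h₂₃ : c₂ = -(2 * β / 3) * c₃ := by linear_combination (1 / 2) * (h₃ - h₁)
  have h₁₃ : c₁ = -(2 * α / 3) * c₃ := by
    linear_combination (1 / 2) * (h₄ - h₂) - (2 * α / 3) * h₄₃
  have h₀₃ : c₀ = -(4 + α ^ 2 + β ^ 2) / 3 * c₃ := by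
    linear_combination (1 / 2) * (h₁ + h₃) - (1 + α ^ 2 / 3) * h₄₃
  refine ⟨c₃, funext fun p => ?_⟩
  rw [hc, Pi.smul_apply, smul_eq_mul, edgeMeanFree]
  linear_combination h₀₃ + p.2 * h₁₃ + p.1 * h₂₃ + p.1 ^ 2 * h₄₃

section Linearity

variable {α β : ℝ} {P R : ℝ × ℝ} {u v : ℝ × ℝ → ℝ}

theorem quadAvg_add (hu : Continuous u) (hv : Continuous v) :
    quadAvg α β (u + v) = quadAvg α β u + quadAvg α β v := by
  have hQ : IsCompact (Quad α β) := (toFinite _).isCompact_convexHull ℝ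
  rw [quadAvg, quadAvg, quadAvg, ← add_div, ← integral_add (hu.continuousOn.integrableOn_compact hQ)
    (hv.continuousOn.integrableOn_compact hQ)]
  rfl

theorem quadAvg_smul (r : ℝ) (u : ℝ × ℝ → ℝ) : quadAvg α β (r • u) = r * quadAvg α β u := by
  simp only [quadAvg, Pi.smul_apply, smul_eq_mul, integral_const_mul, mul_div_assoc]

theorem edgeAvg_add (hu : Continuous u) (hv : Continuous v) :
    edgeAvg P R (u + v) = edgeAvg P R u + edgeAvg P R v :=
  intervalIntegral.integral_add ((hu.comp (by fun_prop)).intervalIntegrable _ _)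
    ((hv.comp (by fun_prop)).intervalIntegrable _ _)

theorem edgeAvg_smul (r : ℝ) (u : ℝ × ℝ → ℝ) : edgeAvg P R (r • u) = r * edgeAvg P R u :=
  intervalIntegral.integral_const_mul r _

end Linearity

def dofs (α β : ℝ) (v : ℝ × ℝ → ℝ) : Fin 5 → ℝ :=
  ![quadAvg α β v, edgeAvg (a1 α β) (a2 α β) v, edgeAvg (a2 α β) (a3 α β) v,
    edgeAvg (a3 α β) (a4 α β) v, edgeAvg (a4 α β) (a1 α β) v]

theorem dofs_eq_iff {α β : ℝ} {v : ℝ × ℝ → ℝ} {c : Fin 5 → ℝ} :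
    dofs α β v = c ↔ quadAvg α β v = c 0 ∧ edgeAvg (a1 α β) (a2 α β) v = c 1 ∧
      edgeAvg (a2 α β) (a3 α β) v = c 2 ∧ edgeAvg (a3 α β) (a4 α β) v = c 3 ∧
      edgeAvg (a4 α β) (a1 α β) v = c 4 := by
  constructor
  · rintro rfl
    exact ⟨rfl, rfl, rfl, rfl, rfl⟩
  · rintro ⟨h₀, h₁, h₂, h₃, h₄⟩
    ext i
    fin_cases i <;> assumption

def dofMap (α β : ℝ) : QLTZspace →ₗ[ℝ] Fin 5 → ℝ where
  toFun v := dofs α β v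
  map_add' v w := by
    have hv := (isQuadratic_of_mem_QLTZspace v.2).continuous
    have hw := (isQuadratic_of_mem_QLTZspace w.2).continuous
    ext i
    fin_cases i <;> simp [dofs, quadAvg_add hv hw, edgeAvg_add hv hw]
  map_smul' r v := by
    ext i
    fin_cases i <;> simp [dofs, quadAvg_smul, edgeAvg_smul]

theorem dofMap_injective {α β : ℝ} (hα : 0 < α) (hβ : 0 < β) (hαβ : α + β < 1) :
    Function.Injective (dofMap α β) := by
  rw [← LinearMap.ker_eq_bot, LinearMap.ker_eq_bot']
  intro v hv
  have h : ∀ i, dofs α β v i = 0 := fun i => congrFun hv i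
  obtain ⟨t, ht⟩ := exists_eq_smul_edgeMeanFree_of_edgeAvg_eq_zero v.2 (h 1) (h 2) (h 3) (h 4)
  have h₀ : t * quadAvg α β (edgeMeanFree α β) = 0 := by rw [← quadAvg_smul, ← ht]; exact h 0
  rw [quadAvg_edgeMeanFree hα hβ hαβ] at h₀
  have ht₀ : t = 0 := (mul_eq_zero.1 h₀).resolve_right (by nlinarith)
  ext1
  rw [ht, ht₀, zero_smul]
  rfl

/-- Unisolvence of the QLTZ element on the reference quadrilateral: the linear map
v ↦ (⨍_Q v, ⨍_{e₁}v, ⨍_{e₂}v, ⨍_{e₃}v, ⨍_{e₄}v) from V = span{1, ξ, η, ξ², η²} to ℝ⁵ is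
bijective; equivalently, every tuple of degrees of freedom is attained by exactly one
v ∈ V. In particular dim V = 5. -/
theorem QLTZ_unisolvent (α β : ℝ) (hα : 0 < α) (hβ : 0 < β) (hαβ : α + β < 1) :
    Function.Bijective (fun v : QLTZspace =>
      (![quadAvg α β v.1,
         edgeAvg (a1 α β) (a2 α β) v.1,
         edgeAvg (a2 α β) (a3 α β) v.1,
         edgeAvg (a3 α β) (a4 α β) v.1,
         edgeAvg (a4 α β) (a1 α β) v.1] : Fin 5 → ℝ)) ∧
    (∀ c : Fin 5 → ℝ, ∃! v : ℝ × ℝ → ℝ, v ∈ QLTZspace ∧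
      quadAvg α β v = c 0 ∧
      edgeAvg (a1 α β) (a2 α β) v = c 1 ∧
      edgeAvg (a2 α β) (a3 α β) v = c 2 ∧
      edgeAvg (a3 α β) (a4 α β) v = c 3 ∧
      edgeAvg (a4 α β) (a1 α β) v = c 4) ∧
    Module.finrank ℝ QLTZspace = 5 := by
  have hinj := dofMap_injective hα hβ hαβ
  have hbij : Function.Bijective (dofMap α β) := ⟨hinj,
    (LinearMap.injective_iff_surjective_of_finrank_eq_finrank
      (by rw [finrank_QLTZspace, Module.finrank_fin_fun])).1 hinj⟩
  refine ⟨hbij, fun c => ?_, finrank_QLTZspace⟩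
  obtain ⟨v, hv⟩ := hbij.2 c
  refine ⟨v, ⟨v.2, dofs_eq_iff.1 hv⟩, fun u ⟨hu, hcu⟩ => ?_⟩
  have huv : dofMap α β ⟨u, hu⟩ = dofMap α β v := (dofs_eq_iff.2 hcu).trans hv.symm
  exact congrArg Subtype.val (hinj huv)
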